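/- arXiv:1601.05040 — 2 statements merged into one kernel-verified Lean document; each statement's English description precedes it below -/
import Mathlib

section
/- Let H be a finite graph (loops allowed) with maximum degree Δ, let G be a connected finite simple graph on n vertices, and suppose that G contains the path P_k on k vertices (1 ≤ k ≤ n) as a (not necessarily induced) subgraph. Then hom(G,H) ≤ hom(P_k,H)·Δ^{n−k}. -/
/-- The number of `H`-colorings of a simple graph `G`, where the target graph (with loops
allowed) is given by a symmetric adjacency relation `H` on its vertex type. -/
noncomputable def homCount {α β : Type*} (G : SimpleGraph α) (H : β → β → Prop) : ℕ :=
  Nat.card {f : α → β // ∀ ⦃u v⦄, G.Adj u v → H (f u) (f v)}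

/-- The degree of a vertex in a graph with loops allowed (a loop adds one to the degree). -/
noncomputable def relDegree {β : Type*} (H : β → β → Prop) (v : β) : ℕ :=
  Nat.card {w : β // H v w}

/-- The maximum degree of a finite graph with loops allowed. -/
noncomputable def relMaxDegree {β : Type*} [Fintype β] (H : β → β → Prop) : ℕ :=
  Finset.univ.sup fun v => relDegree H v

/-!
Grow the vertex set of the path one vertex at a time, always adding a vertex `v` adjacent to
some already present vertex `w`; connectivity of `G` lets this reach every vertex. A coloring of
the larger induced subgraph is determined by its restriction to the smaller one together with
the color of `v`, which is a neighbor of the color of `w` in `H`, so each step costs a factor of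
at most `Δ`. Finally, a coloring of the subgraph induced on the path vertices is determined by
its pullback to `P_k`.
-/

open Finset Function

section
variable {α α' β : Type*} (H : β → β → Prop)

abbrev Coloring (G : SimpleGraph α) : Type _ :=
  {f : α → β // ∀ ⦃u v⦄, G.Adj u v → H (f u) (f v)}

lemma relDegree_le_relMaxDegree [Fintype β] (b : β) : relDegree H b ≤ relMaxDegree H :=
  le_sup (f := relDegree H) (mem_univ b)

lemma card_subtype_prod_le_mul_relMaxDegree {γ : Type*} [Finite γ] [Fintype β] (c : γ → β) :
    Nat.card {p : γ × β // H (c p.1) p.2} ≤ Nat.card γ * relMaxDegree H := by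
  have := Fintype.ofFinite γ
  rw [Nat.card_congr (Equiv.subtypeProdEquivSigmaSubtype fun y x => H (c y) x), Nat.card_sigma,
    Nat.card_eq_fintype_card, ← smul_eq_mul, ← card_univ]
  exact sum_le_card_nsmul _ _ _ fun y _ => relDegree_le_relMaxDegree H (c y)

lemma homCount_le_of_surjective [Finite α'] [Finite β] {G : SimpleGraph α}
    {G' : SimpleGraph α'} (φ : G' →g G) (hφ : Surjective φ) :
    homCount G H ≤ homCount G' H :=
  Nat.card_le_card_of_injective (fun f => ⟨f.1 ∘ φ, fun _ _ h => f.2 (φ.map_rel h)⟩)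
    fun _ _ hfg => Subtype.ext <| hφ.injective_comp_right <| congrArg Subtype.val hfg

lemma homCount_induce_insert_le [Finite α] [Fintype β] (G : SimpleGraph α) (S : Set α)
    {w v : α} (hw : w ∈ S) (hwv : G.Adj w v) :
    homCount (G.induce (insert v S)) H ≤ homCount (G.induce S) H * relMaxDegree H := by
  let restrictWithValue (f : Coloring H (G.induce (insert v S))) :
      {p : Coloring H (G.induce S) × β // H (p.1.1 ⟨w, hw⟩) p.2} :=
    ⟨(⟨fun x => f.1 ⟨x, Set.mem_insert_of_mem v x.2⟩, fun _ _ h => f.2 h⟩,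
      f.1 ⟨v, Set.mem_insert v S⟩), f.2 hwv⟩
  have hinj : Injective restrictWithValue := by
    rintro f g hfg
    simp only [restrictWithValue, Subtype.mk.injEq, Prod.mk.injEq] at hfg
    obtain ⟨hrestr, hv⟩ := hfg
    refine Subtype.ext <| funext fun ⟨x, hx⟩ => ?_
    rcases hx with rfl | hx
    · exact hv
    · exact congrFun hrestr ⟨x, hx⟩
  exact (Nat.card_le_card_of_injective restrictWithValue hinj).trans <|
    card_subtype_prod_le_mul_relMaxDegree H fun g : Coloring H (G.induce S) => g.1 ⟨w, hw⟩

lemma homCount_le_homCount_induce_mul_pow [Fintype α] [Fintype β] {G : SimpleGraph α}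
    (hG : G.Connected) {S : Finset α} (hS : S.Nonempty) :
    homCount G H ≤ homCount (G.induce S) H * relMaxDegree H ^ (Fintype.card α - #S) := by
  classical
  induction hm : Fintype.card α - #S generalizing S with
  | zero =>
    obtain rfl : S = univ := eq_univ_of_card S (le_antisymm (card_le_univ S) (by omega))
    rw [pow_zero, mul_one, coe_univ]
    exact homCount_le_of_surjective H (SimpleGraph.Embedding.induce Set.univ).toHom
      fun x => ⟨⟨x, Set.mem_univ x⟩, rfl⟩
  | succ m ih =>
    obtain ⟨w, hw⟩ := hS
    obtain ⟨v, hv⟩ : ∃ v, v ∉ S := by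
      by_contra! h
      rw [eq_univ_of_forall h, card_univ, Nat.sub_self] at hm
      omega
    obtain ⟨d, -, hdS, hdS'⟩ :=
      (hG.preconnected w v).some.exists_boundary_dart (S : Set α) hw hv
    have hm' : Fintype.card α - #(insert d.snd S) = m := by
      rw [card_insert_of_notMem hdS']
      omega
    calc homCount G H
        ≤ homCount (G.induce (insert d.snd S : Finset α)) H * relMaxDegree H ^ m :=
          ih (insert_nonempty _ _) hm'
      _ ≤ homCount (G.induce S) H * relMaxDegree H * relMaxDegree H ^ m := by
          rw [coe_insert]
          gcongr
          exact homCount_induce_insert_le H G _ hdS d.adj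
      _ = homCount (G.induce S) H * relMaxDegree H ^ (m + 1) := by ring

end

theorem homCount_le_of_pathGraph_subgraph_general {α β : Type*} [Fintype α] [Fintype β]
    (H : β → β → Prop)
    (G : SimpleGraph α) (n k : ℕ) (hcard : Fintype.card α = n)
    (hk : 1 ≤ k) (hGconn : G.Connected)
    (hpath : ∃ u : Fin k → α, Function.Injective u ∧
      ∀ ⦃i j : Fin k⦄, (SimpleGraph.pathGraph k).Adj i j → G.Adj (u i) (u j)) :
    homCount G H ≤ homCount (SimpleGraph.pathGraph k) H * relMaxDegree H ^ (n - k) := by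
  classical
  obtain ⟨u, hu, huadj⟩ := hpath
  set S : Finset α := univ.image u
  have : NeZero k := ⟨by omega⟩
  have hSk : #S = k := by rw [card_image_of_injective _ hu, card_univ, Fintype.card_fin]
  let φ : SimpleGraph.pathGraph k →g G.induce S :=
    ⟨fun i => ⟨u i, mem_image_of_mem u (mem_univ i)⟩, fun hij => huadj hij⟩
  have hφ : Surjective φ := by
    rintro ⟨x, hx⟩
    obtain ⟨i, -, rfl⟩ := mem_image.mp (mem_coe.mp hx)
    exact ⟨i, rfl⟩
  calc homCount G H ≤ homCount (G.induce S) H * relMaxDegree H ^ (n - k) := by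
        rw [← hcard, ← hSk]
        exact homCount_le_homCount_induce_mul_pow H hGconn (univ_nonempty.image u)
    _ ≤ _ := by
        gcongr
        exact homCount_le_of_surjective H φ hφ

/-- If `H` is a finite graph (loops allowed) with maximum degree `Δ` and `G` is a connected
simple graph on `n` vertices containing the path `P_k` (`1 ≤ k ≤ n`) as a subgraph, then
`hom(G,H) ≤ hom(P_k,H)·Δ^{n-k}`. -/
theorem homCount_le_of_pathGraph_subgraph {α β : Type*} [Fintype α] [Fintype β]
    (H : β → β → Prop) (hSymm : Symmetric H)
    (G : SimpleGraph α) (n k : ℕ) (hcard : Fintype.card α = n)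
    (hk : 1 ≤ k) (hkn : k ≤ n) (hGconn : G.Connected)
    (hpath : ∃ u : Fin k → α, Function.Injective u ∧
      ∀ ⦃i j : Fin k⦄, (SimpleGraph.pathGraph k).Adj i j → G.Adj (u i) (u j)) :
    homCount G H ≤ homCount (SimpleGraph.pathGraph k) H * relMaxDegree H ^ (n - k) :=
  homCount_le_of_pathGraph_subgraph_general H G n k hcard hk hGconn hpath
end

section
/- Let δ ≥ 2, n ≥ δ, and q > δ. Then the number of proper q-colorings of K_{δ,n−δ} satisfies hom(K_{δ,n−δ}, K_q) ≤ q(q−1)⋯(q−δ+1)·(q−δ)^{n−δ} + δ²·q^{n−1}. -/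
/-- For `δ ≥ 2`, `n ≥ δ` and `q > δ`, the number of proper `q`-colorings of `K_{δ,n-δ}` is
at most `q(q-1)⋯(q-δ+1)·(q-δ)^{n-δ} + δ²·q^{n-1}`. -/
theorem homCount_completeBipartite_le (δ n q : ℕ) (hδ : 2 ≤ δ) (hn : δ ≤ n) (hq : δ < q) :
    homCount (completeBipartiteGraph (Fin δ) (Fin (n - δ))) (fun a b : Fin q => a ≠ b) ≤
      (∏ i ∈ Finset.range δ, (q - i)) * (q - δ) ^ (n - δ) + δ ^ 2 * q ^ (n - 1) := by
  classical
  set G := completeBipartiteGraph (Fin δ) (Fin (n - δ)) with hG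
  have hcardα : Fintype.card (Fin δ ⊕ Fin (n - δ)) = n := by
    simp [Nat.add_sub_cancel' hn]
  set S : Finset ((Fin δ ⊕ Fin (n - δ)) → Fin q) :=
    Finset.univ.filter (fun f => ∀ ⦃u v⦄, G.Adj u v → f u ≠ f v) with hS
  have hhom : homCount G (fun a b : Fin q => a ≠ b) = S.card := by
    rw [homCount, Nat.card_eq_fintype_card, Fintype.card_subtype]
  set A := S.filter (fun f => Function.Injective (f ∘ Sum.inl)) with hA0
  set B := Finset.univ.filter
    (fun f : (Fin δ ⊕ Fin (n - δ)) → Fin q => ¬ Function.Injective (f ∘ Sum.inl)) with hB0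
  have hSAB : S ⊆ A ∪ B := by
    intro f hf
    by_cases h : Function.Injective (f ∘ Sum.inl)
    · exact Finset.mem_union_left _ (Finset.mem_filter.2 ⟨hf, h⟩)
    · exact Finset.mem_union_right _ (Finset.mem_filter.2 ⟨Finset.mem_univ _, h⟩)
  have hAcard : A.card ≤ (∏ i ∈ Finset.range δ, (q - i)) * (q - δ) ^ (n - δ) := by
    have hsub : ∀ e : Fin δ ↪ Fin q,
        Fintype.card {c : Fin q // c ∉ Set.range e} = q - δ := by
      intro e
      have h1 : Fintype.card {c : Fin q // c ∈ Set.range e} = δ := by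
        rw [Fintype.card_congr (Equiv.ofInjective e e.injective).symm]
        simp
      rw [Fintype.card_subtype_compl, h1, Fintype.card_fin]
    have key : Fintype.card {f // f ∈ A} ≤
        Fintype.card (Σ e : Fin δ ↪ Fin q,
          (Fin (n - δ) → {c : Fin q // c ∉ Set.range e})) := by
      have hmem : ∀ f ∈ A, (∀ ⦃u v⦄, G.Adj u v → f u ≠ f v) ∧
          Function.Injective (f ∘ Sum.inl) := by
        intro f hf
        rw [hA0, Finset.mem_filter, hS, Finset.mem_filter] at hf
        exact ⟨hf.1.2, hf.2⟩
      refine Fintype.card_le_of_injective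
        (fun fp => ⟨⟨fp.1 ∘ Sum.inl, (hmem fp.1 fp.2).2⟩,
          fun k => ⟨fp.1 (Sum.inr k), ?_⟩⟩) ?_
      · rintro ⟨i, hi⟩
        have hadj : G.Adj (Sum.inl i) (Sum.inr k) := by simp [hG]
        exact (hmem fp.1 fp.2).1 hadj hi
      · intro a b hab
        have h1 : (a.1 ∘ Sum.inl) = (b.1 ∘ Sum.inl) :=
          congrArg (fun e : Fin δ ↪ Fin q => (e : Fin δ → Fin q)) (congrArg Sigma.fst hab)
        have h2 : (fun k => a.1 (Sum.inr k)) = (fun k => b.1 (Sum.inr k)) := by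
          have := congrArg
            (fun p : (Σ e : Fin δ ↪ Fin q,
              (Fin (n - δ) → {c : Fin q // c ∉ Set.range e})) =>
              (fun k => (p.2 k).val)) hab
          exact this
        apply Subtype.ext
        funext u
        cases u with
        | inl i => exact congrFun h1 i
        | inr k => exact congrFun h2 k
    have hsig : Fintype.card (Σ e : Fin δ ↪ Fin q,
        (Fin (n - δ) → {c : Fin q // c ∉ Set.range e}))
        = (∏ i ∈ Finset.range δ, (q - i)) * (q - δ) ^ (n - δ) := by
      rw [Fintype.card_sigma]
      have : ∀ e : Fin δ ↪ Fin q,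
          Fintype.card (Fin (n - δ) → {c : Fin q // c ∉ Set.range e})
            = (q - δ) ^ (n - δ) := by
        intro e
        rw [Fintype.card_fun, hsub e, Fintype.card_fin]
      rw [Finset.sum_congr rfl (fun e _ => this e), Finset.sum_const, smul_eq_mul,
        Finset.card_univ, Fintype.card_embedding_eq, Fintype.card_fin, Fintype.card_fin,
        Nat.descFactorial_eq_prod_range]
    calc A.card = Fintype.card {f // f ∈ A} := (Fintype.card_coe A).symm
      _ ≤ _ := key
      _ = _ := hsig
  have hBcard : B.card ≤ δ ^ 2 * q ^ (n - 1) := by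
    have hsubB : B ⊆ (Finset.univ : Finset (Fin δ × Fin δ)).biUnion
        (fun p => Finset.univ.filter
          (fun f : (Fin δ ⊕ Fin (n - δ)) → Fin q =>
            p.1 ≠ p.2 ∧ f (Sum.inl p.1) = f (Sum.inl p.2))) := by
      intro f hf
      rw [hB0, Finset.mem_filter] at hf
      obtain ⟨i, j, hij, hne⟩ := Function.not_injective_iff.1 hf.2
      exact Finset.mem_biUnion.2 ⟨(i, j), Finset.mem_univ _,
        Finset.mem_filter.2 ⟨Finset.mem_univ _, hne, hij⟩⟩
    have hfib : ∀ p : Fin δ × Fin δ,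
        (Finset.univ.filter
          (fun f : (Fin δ ⊕ Fin (n - δ)) → Fin q =>
            p.1 ≠ p.2 ∧ f (Sum.inl p.1) = f (Sum.inl p.2))).card ≤ q ^ (n - 1) := by
      intro p
      by_cases hp : p.1 = p.2
      · have : (Finset.univ.filter
            (fun f : (Fin δ ⊕ Fin (n - δ)) → Fin q =>
              p.1 ≠ p.2 ∧ f (Sum.inl p.1) = f (Sum.inl p.2))) = ∅ := by
          apply Finset.filter_false_of_mem
          intro f _ h
          exact h.1 hp
        simp [this]
      · set b : Fin δ ⊕ Fin (n - δ) := Sum.inl p.2 with hb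
        have hcards : Fintype.card {v : Fin δ ⊕ Fin (n - δ) // v ≠ b} = n - 1 := by
          have : Fintype.card {v : Fin δ ⊕ Fin (n - δ) // v = b} = 1 :=
            Fintype.card_subtype_eq b
          rw [Fintype.card_subtype_compl, this, hcardα]
        calc (Finset.univ.filter
            (fun f : (Fin δ ⊕ Fin (n - δ)) → Fin q =>
              p.1 ≠ p.2 ∧ f (Sum.inl p.1) = f (Sum.inl p.2))).card
            ≤ (Finset.univ : Finset ({v : Fin δ ⊕ Fin (n - δ) // v ≠ b} → Fin q)).card := by
              apply Finset.card_le_card_of_injOn (fun f => fun v => f v.1)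
              · intro f _; exact Finset.mem_univ _
              · intro f hf g hg hfg
                rw [Finset.mem_coe, Finset.mem_filter] at hf hg
                funext v
                by_cases hv : v = b
                · subst hv
                  have h1 : f (Sum.inl p.1) = g (Sum.inl p.1) := by
                    have ha : (Sum.inl p.1 : Fin δ ⊕ Fin (n - δ)) ≠ b := by
                      simp [hb, hp]
                    exact congrFun hfg ⟨Sum.inl p.1, ha⟩
                  rw [← hf.2.2, ← hg.2.2, h1]
                · exact congrFun hfg ⟨v, hv⟩
          _ = q ^ (n - 1) := by
              rw [Finset.card_univ, Fintype.card_fun, hcards, Fintype.card_fin]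
    calc B.card ≤ ((Finset.univ : Finset (Fin δ × Fin δ)).biUnion
          (fun p => Finset.univ.filter
            (fun f : (Fin δ ⊕ Fin (n - δ)) → Fin q =>
              p.1 ≠ p.2 ∧ f (Sum.inl p.1) = f (Sum.inl p.2)))).card :=
        Finset.card_le_card hsubB
      _ ≤ ∑ p : Fin δ × Fin δ, (Finset.univ.filter
            (fun f : (Fin δ ⊕ Fin (n - δ)) → Fin q =>
              p.1 ≠ p.2 ∧ f (Sum.inl p.1) = f (Sum.inl p.2))).card :=
        Finset.card_biUnion_le
      _ ≤ ∑ _p : Fin δ × Fin δ, q ^ (n - 1) :=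
        Finset.sum_le_sum (fun p _ => hfib p)
      _ = δ ^ 2 * q ^ (n - 1) := by
        rw [Finset.sum_const, Finset.card_univ, smul_eq_mul]
        simp [Fintype.card_prod, sq]
  calc homCount G (fun a b : Fin q => a ≠ b) = S.card := hhom
    _ ≤ (A ∪ B).card := Finset.card_le_card hSAB
    _ ≤ A.card + B.card := Finset.card_union_le A B
    _ ≤ _ := Nat.add_le_add hAcard hBcard
end
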